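/- Let H be a separable complex Hilbert space, {S_γ}_{γ∈Γ} a family of finite-dimensional subspaces of H, χ = ∪_{γ∈Γ} S_γ, and S_{γ,θ} = S_γ + S_θ. Let Ψ = {ψ_i}_{i∈I} be a Bessel sequence in H with sampling operator A, and for every γ,θ ∈ Γ let Φ_{γ,θ} be a Parseval frame for S_{γ,θ}. Then A is stable on χ with constants α and β if and only if for all γ,θ ∈ Γ: (i) dim(range(G_{Φ_{γ,θ},Ψ})) = dim(S_{γ,θ}) and (ii) σ(G_{Φ_{γ,θ},Ψ}* G_{Φ_{γ,θ},Ψ}) ⊆ {0} ∪ [α,β]. -/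

import Mathlib

/-!
The synthesis operator `T` of a Parseval frame for `S γ + S θ` maps `(ker T)ᗮ` isometrically onto
`S γ + S θ`, so with `G = A T` stability of `A` on `S γ + S θ` is the two-sided bound
`α ‖c‖² ≤ ‖G c‖² ≤ β ‖c‖²` on `(ker T)ᗮ`. Since `ker T ≤ ker G`, the rank condition says exactly
that `ker G = ker T`, and on `(ker G)ᗮ = (ker (G* G))ᗮ` the Rayleigh quotient of `G* G` stays in
`[α, β]` iff every nonzero eigenvalue does. Finally, the differences of points of `χ` are exactly
the elements of the sums `S γ + S θ`.
-/

open scoped ComplexInnerProductSpace InnerProductSpace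

open Module.End RCLike LinearMap

theorem LinearMap.ker_comp_eq_iff_finrank_range_comp_eq {K V W X : Type*} [DivisionRing K]
    [AddCommGroup V] [Module K V] [AddCommGroup W] [Module K W] [AddCommGroup X] [Module K X]
    [FiniteDimensional K V] (f : V →ₗ[K] W) (g : W →ₗ[K] X) :
    ker (g ∘ₗ f) = ker f ↔ Module.finrank K (range (g ∘ₗ f)) = Module.finrank K (range f) := by
  have hgf := finrank_range_add_finrank_ker (g ∘ₗ f)
  have hf := finrank_range_add_finrank_ker f
  constructor
  · intro h
    rw [h] at hgf
    omega
  · intro h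
    exact (Submodule.eq_of_le_of_finrank_le (ker_le_ker_comp f g) (by omega)).symm

theorem Submodule.forall_sub_mem_iUnion_iff_forall_mem_sup {R M Γ : Type*} [Ring R]
    [AddCommGroup M] [Module R M] (S : Γ → Submodule R M) (p : M → Prop) :
    (∀ x₁ ∈ ⋃ γ, (S γ : Set M), ∀ x₂ ∈ ⋃ γ, (S γ : Set M), p (x₁ - x₂)) ↔
      ∀ γ θ, ∀ h ∈ S γ ⊔ S θ, p h := by
  simp only [Set.mem_iUnion, SetLike.mem_coe]
  constructor
  · intro hp γ θ h hh
    obtain ⟨u, hu, v, hv, rfl⟩ := Submodule.mem_sup.mp hh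
    simpa using hp u ⟨γ, hu⟩ (-v) ⟨θ, (S θ).neg_mem hv⟩
  · rintro hp x₁ ⟨γ, hx₁⟩ x₂ ⟨θ, hx₂⟩
    exact hp γ θ _ (Submodule.sub_mem _ (Submodule.mem_sup_left hx₁) (Submodule.mem_sup_right hx₂))

namespace LinearMap.IsSymmetric

variable {𝕜 E : Type*} [RCLike 𝕜] [NormedAddCommGroup E] [InnerProductSpace 𝕜 E]
  [FiniteDimensional 𝕜 E] {T : E →ₗ[𝕜] E}

theorem re_inner_apply_eq_sum_eigenvalues (hT : T.IsSymmetric) (c : E) :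
    re ⟪c, T c⟫_𝕜 = ∑ i, hT.eigenvalues rfl i * ‖⟪hT.eigenvectorBasis rfl i, c⟫_𝕜‖ ^ 2 := by
  rw [← (hT.eigenvectorBasis rfl).sum_inner_mul_inner, map_sum]
  refine Finset.sum_congr rfl fun i _ => ?_
  rw [← hT, apply_eigenvectorBasis, inner_smul_left, conj_ofReal, mul_left_comm, re_ofReal_mul,
    inner_mul_symm_re_eq_norm, norm_mul, ← inner_conj_symm, norm_conj, sq]

theorem spectrum_subset_zero_union_Icc_iff (hT : T.IsSymmetric) {α β : ℝ} :
    spectrum 𝕜 T ⊆ ((↑) : ℝ → 𝕜) '' ({0} ∪ Set.Icc α β) ↔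
      ∀ c ∈ (ker T)ᗮ, α * ‖c‖ ^ 2 ≤ re ⟪c, T c⟫_𝕜 ∧ re ⟪c, T c⟫_𝕜 ≤ β * ‖c‖ ^ 2 := by
  constructor
  · intro hspec c hc
    rw [re_inner_apply_eq_sum_eigenvalues hT, ← (hT.eigenvectorBasis rfl).sum_sq_norm_inner_right,
      Finset.mul_sum, Finset.mul_sum]
    have hμ (i) : hT.eigenvalues rfl i = 0 ∨ hT.eigenvalues rfl i ∈ Set.Icc α β := by
      obtain ⟨t, ht, hteq⟩ :=
        hspec (hasEigenvalue_iff_mem_spectrum.mp (hT.hasEigenvalue_eigenvalues rfl i))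
      rwa [ofReal_inj.mp hteq] at ht
    have hker (i) (hi : hT.eigenvalues rfl i = 0) : ⟪hT.eigenvectorBasis rfl i, c⟫_𝕜 = 0 :=
      Submodule.inner_right_of_mem_orthogonal (by simp [hi]) hc
    have hterm (i) :
        α * ‖⟪hT.eigenvectorBasis rfl i, c⟫_𝕜‖ ^ 2
            ≤ hT.eigenvalues rfl i * ‖⟪hT.eigenvectorBasis rfl i, c⟫_𝕜‖ ^ 2 ∧
          hT.eigenvalues rfl i * ‖⟪hT.eigenvectorBasis rfl i, c⟫_𝕜‖ ^ 2
            ≤ β * ‖⟪hT.eigenvectorBasis rfl i, c⟫_𝕜‖ ^ 2 := by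
      rcases hμ i with h0 | ⟨hα, hβ⟩
      · simp [h0, hker i h0]
      · exact ⟨by gcongr, by gcongr⟩
    exact ⟨Finset.sum_le_sum fun i _ => (hterm i).1, Finset.sum_le_sum fun i _ => (hterm i).2⟩
  · rintro hbound z hz
    obtain ⟨v, hv, hv0⟩ := (hasEigenvalue_iff_mem_spectrum.mpr hz).exists_hasEigenvector
    have hTv : T v = z • v := mem_eigenspace_iff.mp hv
    obtain ⟨t, rfl⟩ : ∃ t : ℝ, (t : 𝕜) = z :=
      ⟨re z, conj_eq_iff_re.mp (hT.conj_eigenvalue_eq_self (hasEigenvalue_iff_mem_spectrum.mpr hz))⟩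
    refine ⟨t, ?_, rfl⟩
    rcases eq_or_ne t 0 with ht | ht
    · exact Or.inl ht
    have hv_perp : v ∈ (ker T)ᗮ := fun k hk => by
      have : (t : 𝕜) * ⟪k, v⟫_𝕜 = 0 := by
        rw [← inner_smul_right, ← hTv, ← hT, mem_ker.mp hk, inner_zero_left]
      simpa [ht] using this
    have hquad : re ⟪v, T v⟫_𝕜 = t * ‖v‖ ^ 2 := by
      rw [inner_product_apply_eigenvector hTv]; norm_cast
    have hpos : 0 < ‖v‖ ^ 2 := by positivity
    obtain ⟨h1, h2⟩ := hbound v hv_perp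
    rw [hquad] at h1 h2
    exact Or.inr ⟨le_of_mul_le_mul_right h1 hpos, le_of_mul_le_mul_right h2 hpos⟩

end LinearMap.IsSymmetric

section

variable {𝕜 E F : Type*} [RCLike 𝕜] [NormedAddCommGroup E] [InnerProductSpace 𝕜 E]
  [NormedAddCommGroup F] [InnerProductSpace 𝕜 F]

theorem ContinuousLinearMap.spectrum_adjoint_comp_self_subset_zero_union_Icc_iff
    [FiniteDimensional 𝕜 E] [CompleteSpace E] [CompleteSpace F] (G : E →L[𝕜] F) {α β : ℝ} :
    spectrum 𝕜 (adjoint G ∘L G) ⊆ ((↑) : ℝ → 𝕜) '' ({0} ∪ Set.Icc α β) ↔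
      ∀ c ∈ (ker (G : E →ₗ[𝕜] F))ᗮ, α * ‖c‖ ^ 2 ≤ ‖G c‖ ^ 2 ∧ ‖G c‖ ^ 2 ≤ β * ‖c‖ ^ 2 := by
  rw [spectrum_eq, G.isPositive_adjoint_comp_self.isSymmetric.spectrum_subset_zero_union_Icc_iff,
    ← coe_coe, ker_adjoint_comp_self]
  simp only [coe_coe, ← apply_norm_sq_eq_inner_adjoint_right]

end

section Frames

variable {𝕜 H : Type*} [RCLike 𝕜] [NormedAddCommGroup H] [InnerProductSpace 𝕜 H] {d : ℕ}

structure IsParsevalFrame (T : Submodule 𝕜 H) (φ : Fin d → H) : Prop where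
  mem : ∀ j, φ j ∈ T
  sum_sq_norm_inner : ∀ h ∈ T, ∑ j, ‖⟪φ j, h⟫_𝕜‖ ^ 2 = ‖h‖ ^ 2

variable (𝕜) in
noncomputable def frameSynthesis (φ : Fin d → H) : EuclideanSpace 𝕜 (Fin d) →ₗ[𝕜] H :=
  Fintype.linearCombination 𝕜 φ ∘ₗ (WithLp.linearEquiv 2 𝕜 (Fin d → 𝕜)).toLinearMap

variable (𝕜) in
noncomputable def frameAnalysis (φ : Fin d → H) : H →ₗ[𝕜] EuclideanSpace 𝕜 (Fin d) :=
  (WithLp.linearEquiv 2 𝕜 (Fin d → 𝕜)).symm.toLinearMap ∘ₗ LinearMap.pi fun j => innerₛₗ 𝕜 (φ j)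

theorem frameSynthesis_apply (φ : Fin d → H) (c : EuclideanSpace 𝕜 (Fin d)) :
    frameSynthesis 𝕜 φ c = ∑ j, c j • φ j := by
  simp [frameSynthesis, Fintype.linearCombination_apply]

@[simp]
theorem frameAnalysis_apply (φ : Fin d → H) (h : H) (j : Fin d) :
    frameAnalysis 𝕜 φ h j = ⟪φ j, h⟫_𝕜 := rfl

theorem inner_frameSynthesis_left (φ : Fin d → H) (c : EuclideanSpace 𝕜 (Fin d)) (h : H) :
    ⟪frameSynthesis 𝕜 φ c, h⟫_𝕜 = ⟪c, frameAnalysis 𝕜 φ h⟫_𝕜 := by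
  simp [frameSynthesis_apply, sum_inner, PiLp.inner_apply, inner_smul_left, mul_comm]

namespace IsParsevalFrame

variable {T : Submodule 𝕜 H} {φ : Fin d → H}

theorem norm_frameAnalysis (hφ : IsParsevalFrame T φ) {h : H} (hh : h ∈ T) :
    ‖frameAnalysis 𝕜 φ h‖ = ‖h‖ := by
  rw [EuclideanSpace.norm_eq, ← Real.sqrt_sq (norm_nonneg h), ← hφ.sum_sq_norm_inner h hh]
  rfl

theorem inner_frameAnalysis (hφ : IsParsevalFrame T φ) {h k : H} (hh : h ∈ T) (hk : k ∈ T) :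
    ⟪frameAnalysis 𝕜 φ h, frameAnalysis 𝕜 φ k⟫_𝕜 = ⟪h, k⟫_𝕜 :=
  (LinearMap.norm_map_iff_inner_map_map (frameAnalysis 𝕜 φ ∘ₗ T.subtype)).mp
    (fun x => hφ.norm_frameAnalysis x.2) ⟨h, hh⟩ ⟨k, hk⟩

theorem frameSynthesis_mem (hφ : IsParsevalFrame T φ) (c : EuclideanSpace 𝕜 (Fin d)) :
    frameSynthesis 𝕜 φ c ∈ T := by
  rw [frameSynthesis_apply]
  exact T.sum_mem fun j _ => T.smul_mem _ (hφ.mem j)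

theorem frameSynthesis_frameAnalysis (hφ : IsParsevalFrame T φ) {h : H} (hh : h ∈ T) :
    frameSynthesis 𝕜 φ (frameAnalysis 𝕜 φ h) = h := by
  set e := frameSynthesis 𝕜 φ (frameAnalysis 𝕜 φ h) - h
  have he : e ∈ T := T.sub_mem (hφ.frameSynthesis_mem _) hh
  have : ⟪e, e⟫_𝕜 = 0 := by
    rw [inner_sub_left, inner_frameSynthesis_left, hφ.inner_frameAnalysis hh he, sub_self]
  exact sub_eq_zero.mp (inner_self_eq_zero.mp this)

theorem range_frameSynthesis (hφ : IsParsevalFrame T φ) :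
    LinearMap.range (frameSynthesis 𝕜 φ) = T :=
  le_antisymm (by rintro _ ⟨c, rfl⟩; exact hφ.frameSynthesis_mem c)
    fun _ hh => ⟨_, hφ.frameSynthesis_frameAnalysis hh⟩

theorem norm_frameSynthesis (hφ : IsParsevalFrame T φ) {c : EuclideanSpace 𝕜 (Fin d)}
    (hc : c ∈ (LinearMap.ker (frameSynthesis 𝕜 φ))ᗮ) :
    ‖frameSynthesis 𝕜 φ c‖ = ‖c‖ := by
  set h := frameSynthesis 𝕜 φ c
  have hana : frameAnalysis 𝕜 φ h ∈ (LinearMap.ker (frameSynthesis 𝕜 φ))ᗮ := fun k hk => by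
    rw [← inner_frameSynthesis_left, LinearMap.mem_ker.mp hk, inner_zero_left]
  have hker : frameAnalysis 𝕜 φ h - c ∈ LinearMap.ker (frameSynthesis 𝕜 φ) := by
    rw [LinearMap.mem_ker, map_sub, hφ.frameSynthesis_frameAnalysis (hφ.frameSynthesis_mem c),
      sub_self]
  have : frameAnalysis 𝕜 φ h = c := sub_eq_zero.mp <|
    Submodule.disjoint_def.mp (Submodule.orthogonal_disjoint _) _ hker (Submodule.sub_mem _ hana hc)
  rw [← hφ.norm_frameAnalysis (hφ.frameSynthesis_mem c), this]

end IsParsevalFrame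

end Frames

section

variable {𝕜 E H F : Type*} [RCLike 𝕜] [NormedAddCommGroup E] [InnerProductSpace 𝕜 E]
  [NormedAddCommGroup H] [InnerProductSpace 𝕜 H] [NormedAddCommGroup F] [InnerProductSpace 𝕜 F]

theorem LinearMap.forall_mem_range_iff_forall_mem_orthogonal_ker [FiniteDimensional 𝕜 E]
    (P : E →ₗ[𝕜] H) (p : H → Prop) :
    (∀ h ∈ range P, p h) ↔ ∀ c ∈ (ker P)ᗮ, p (P c) := by
  refine ⟨fun hp c _ => hp _ (mem_range_self P c), ?_⟩
  rintro hp _ ⟨c, rfl⟩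
  obtain ⟨k, hk, c', hc', rfl⟩ := (ker P).exists_add_mem_mem_orthogonal c
  simpa [mem_ker.mp hk] using hp c' hc'

theorem stable_on_range_iff_finrank_and_spectrum [FiniteDimensional 𝕜 E] [CompleteSpace E]
    [CompleteSpace F] (P : E →ₗ[𝕜] H) (hP : ∀ c ∈ (ker P)ᗮ, ‖P c‖ = ‖c‖) (A : H →ₗ[𝕜] F)
    (G : E →L[𝕜] F) (hG : (G : E →ₗ[𝕜] F) = A ∘ₗ P) {α β : ℝ} (hα : 0 < α) :
    (∀ h ∈ range P, α * ‖h‖ ^ 2 ≤ ‖A h‖ ^ 2 ∧ ‖A h‖ ^ 2 ≤ β * ‖h‖ ^ 2) ↔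
      Module.finrank 𝕜 (range (G : E →ₗ[𝕜] F)) = Module.finrank 𝕜 (range P) ∧
        spectrum 𝕜 (ContinuousLinearMap.adjoint G ∘L G) ⊆ ((↑) : ℝ → 𝕜) '' ({0} ∪ Set.Icc α β) := by
  have hGP (c : E) : G c = A (P c) := LinearMap.congr_fun hG c
  have hbounds : (∀ h ∈ range P, α * ‖h‖ ^ 2 ≤ ‖A h‖ ^ 2 ∧ ‖A h‖ ^ 2 ≤ β * ‖h‖ ^ 2) ↔
      ∀ c ∈ (ker P)ᗮ, α * ‖c‖ ^ 2 ≤ ‖G c‖ ^ 2 ∧ ‖G c‖ ^ 2 ≤ β * ‖c‖ ^ 2 := by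
    rw [P.forall_mem_range_iff_forall_mem_orthogonal_ker]
    exact forall₂_congr fun c hc => by rw [hP c hc, hGP]
  rw [G.spectrum_adjoint_comp_self_subset_zero_union_Icc_iff, hG,
    ← ker_comp_eq_iff_finrank_range_comp_eq]
  constructor
  · intro hstable
    have hker : ker (A ∘ₗ P) = ker P := by
      refine le_antisymm (fun c hc => ?_) (ker_le_ker_comp P A)
      have h0 : A (P c) = 0 := hc
      have := (hstable (P c) (mem_range_self P c)).1
      rw [h0, norm_zero, zero_pow two_ne_zero] at this
      exact norm_eq_zero.mp (pow_eq_zero_iff two_ne_zero |>.mp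
        (le_antisymm (nonpos_of_mul_nonpos_right this hα) (sq_nonneg _)))
    exact ⟨hker, hker ▸ hbounds.mp hstable⟩
  · rintro ⟨hker, hspec⟩
    exact hbounds.mpr (hker ▸ hspec)

end

theorem stmt_11_general
    {H : Type*} [NormedAddCommGroup H] [InnerProductSpace ℂ H]
    {I : Type*}
    {Γ : Type*} (S : Γ → Submodule ℂ H)
    (A : H →L[ℂ] lp (fun _ : I => ℂ) 2)
    (d : Γ → Γ → ℕ) (φ : ∀ γ θ : Γ, Fin (d γ θ) → H)
    (hmem : ∀ γ θ : Γ, ∀ j, φ γ θ j ∈ (S γ ⊔ S θ : Submodule ℂ H))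
    (hParseval : ∀ γ θ : Γ, ∀ h ∈ (S γ ⊔ S θ : Submodule ℂ H),
      ∑ j : Fin (d γ θ), ‖⟪φ γ θ j, h⟫‖ ^ 2 = ‖h‖ ^ 2)
    (G : ∀ γ θ : Γ, EuclideanSpace ℂ (Fin (d γ θ)) →L[ℂ] lp (fun _ : I => ℂ) 2)
    (hG : ∀ γ θ : Γ, ∀ c : EuclideanSpace ℂ (Fin (d γ θ)),
      G γ θ c = A (∑ j : Fin (d γ θ), c j • φ γ θ j))
    (α β : ℝ) (hα : 0 < α) :
    (∀ x₁ ∈ ⋃ γ : Γ, (S γ : Set H), ∀ x₂ ∈ ⋃ γ : Γ, (S γ : Set H),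
        α * ‖x₁ - x₂‖ ^ 2 ≤ ‖A x₁ - A x₂‖ ^ 2 ∧ ‖A x₁ - A x₂‖ ^ 2 ≤ β * ‖x₁ - x₂‖ ^ 2) ↔
      (∀ γ θ : Γ,
        Module.finrank ℂ (LinearMap.range (G γ θ).toLinearMap) =
            Module.finrank ℂ (S γ ⊔ S θ : Submodule ℂ H) ∧
          spectrum ℂ ((ContinuousLinearMap.adjoint (G γ θ)).comp (G γ θ)) ⊆
            (fun t : ℝ => (t : ℂ)) '' ({0} ∪ Set.Icc α β)) := by
  simp only [← map_sub]
  rw [Submodule.forall_sub_mem_iUnion_iff_forall_mem_sup S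
    fun h => α * ‖h‖ ^ 2 ≤ ‖A h‖ ^ 2 ∧ ‖A h‖ ^ 2 ≤ β * ‖h‖ ^ 2]
  refine forall₂_congr fun γ θ => ?_
  have hφ : IsParsevalFrame (S γ ⊔ S θ) (φ γ θ) := ⟨hmem γ θ, hParseval γ θ⟩
  rw [← hφ.range_frameSynthesis]
  have hGT : (G γ θ : _ →ₗ[ℂ] _) = (A : H →ₗ[ℂ] _) ∘ₗ frameSynthesis ℂ (φ γ θ) :=
    LinearMap.ext fun c => by
      simp only [LinearMap.comp_apply, frameSynthesis_apply]; exact hG γ θ c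
  exact stable_on_range_iff_finrank_and_spectrum _ (fun _ => hφ.norm_frameSynthesis) _ _ hGT hα

/-- Let `{S γ}_{γ ∈ Γ}` be a family of finite-dimensional subspaces of a
separable complex Hilbert space `H`, `χ = ⋃ γ, S γ`, and `S_{γ,θ} = S γ + S θ`.  Let `Ψ` be a
Bessel sequence in `H` with sampling operator `A`, and for every `γ, θ ∈ Γ` let `Φ_{γ,θ}` be a
Parseval frame for `S_{γ,θ}` with cross-correlation operator `G_{γ,θ} = A ∘ B*_{Φ_{γ,θ}}`.
Then `A` is stable on `χ` with constants `α` and `β` if and only if for all `γ, θ ∈ Γ`: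
(i) `dim (range G_{γ,θ}) = dim S_{γ,θ}` and (ii) `σ(G_{γ,θ}* G_{γ,θ}) ⊆ {0} ∪ [α, β]`. -/
theorem stmt_11
    {H : Type*} [NormedAddCommGroup H] [InnerProductSpace ℂ H] [CompleteSpace H]
    [SecondCountableTopology H]
    {I : Type*} [Countable I]
    {Γ : Type*} (S : Γ → Submodule ℂ H) (hfin : ∀ γ, FiniteDimensional ℂ (S γ))
    (ψ : I → H) (B : ℝ) (hB : 0 < B)
    (hBessel : ∀ h : H, ∑' i : I, ‖⟪ψ i, h⟫‖ ^ 2 ≤ B * ‖h‖ ^ 2)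
    (A : H →L[ℂ] lp (fun _ : I => ℂ) 2)
    (hA : ∀ f : H, ∀ i : I, A f i = ⟪ψ i, f⟫)
    (d : Γ → Γ → ℕ) (φ : ∀ γ θ : Γ, Fin (d γ θ) → H)
    (hmem : ∀ γ θ : Γ, ∀ j, φ γ θ j ∈ (S γ ⊔ S θ : Submodule ℂ H))
    (hParseval : ∀ γ θ : Γ, ∀ h ∈ (S γ ⊔ S θ : Submodule ℂ H),
      ∑ j : Fin (d γ θ), ‖⟪φ γ θ j, h⟫‖ ^ 2 = ‖h‖ ^ 2)
    (G : ∀ γ θ : Γ, EuclideanSpace ℂ (Fin (d γ θ)) →L[ℂ] lp (fun _ : I => ℂ) 2)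
    (hG : ∀ γ θ : Γ, ∀ c : EuclideanSpace ℂ (Fin (d γ θ)),
      G γ θ c = A (∑ j : Fin (d γ θ), c j • φ γ θ j))
    (α β : ℝ) (hα : 0 < α) (hαβ : α ≤ β) :
    (∀ x₁ ∈ ⋃ γ : Γ, (S γ : Set H), ∀ x₂ ∈ ⋃ γ : Γ, (S γ : Set H),
        α * ‖x₁ - x₂‖ ^ 2 ≤ ‖A x₁ - A x₂‖ ^ 2 ∧ ‖A x₁ - A x₂‖ ^ 2 ≤ β * ‖x₁ - x₂‖ ^ 2) ↔
      (∀ γ θ : Γ,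
        Module.finrank ℂ (LinearMap.range (G γ θ).toLinearMap) =
            Module.finrank ℂ (S γ ⊔ S θ : Submodule ℂ H) ∧
          spectrum ℂ ((ContinuousLinearMap.adjoint (G γ θ)).comp (G γ θ)) ⊆
            (fun t : ℝ => (t : ℂ)) '' ({0} ∪ Set.Icc α β)) :=
  stmt_11_general S A d φ hmem hParseval G hG α β hα
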